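/- Let G be a finite connected graph and fix vertices s and v with s ≠ v. Then Brandes' recursion holds: δ_{s•}(v) = ∑_{w : d(s,w) = d(s,v)+1, v ~ w} (σ_{sv}/σ_{sw}) · (1 + δ_{s•}(w)), where the sum is over neighbors w of v that are one level further from s than v. -/
import Mathlib


open SimpleGraph Finset

variable {V : Type*}

/-- Number of shortest paths (geodesics) from `s` to `t`. -/
noncomputable def numSP (G : SimpleGraph V) (s t : V) : ℕ :=
  Nat.card {p : G.Walk s t // p.length = G.dist s t}

/-- Number of shortest paths from `s` to `t` passing through `v`. -/
noncomputable def numSPthru (G : SimpleGraph V) (s t v : V) : ℕ :=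
  Nat.card {p : G.Walk s t // p.length = G.dist s t ∧ v ∈ p.support}

/-- Dependency of `s` on `v`: δ_{s•}(v) = ∑_{t ∉ {s,v}} σ_{st}(v)/σ_{st}. -/
noncomputable def dep [Fintype V] [DecidableEq V] (G : SimpleGraph V) (s v : V) : ℝ :=
  ∑ t ∈ univ.filter (fun t => t ≠ s ∧ t ≠ v), (numSPthru G s t v : ℝ) / (numSP G s t)

/-- Betweenness centrality (ordered pairs convention). -/
noncomputable def BC [Fintype V] [DecidableEq V] (G : SimpleGraph V) (v : V) : ℝ :=
  ∑ s : V, ∑ t : V,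
    if s ≠ t ∧ s ≠ v ∧ t ≠ v then (numSPthru G s t v : ℝ) / (numSP G s t) else 0

section Aux
variable {G : SimpleGraph V}

lemma finite_sw [Fintype V] (u v : V) (n : ℕ) :
    Finite {p : G.Walk u v // p.length = n} := by
  classical infer_instance

lemma numSP_pos [Fintype V] (hG : G.Connected) (s t : V) : 0 < numSP G s t := by
  obtain ⟨p, hp⟩ := hG.exists_walk_length_eq_dist s t
  have : Finite {p : G.Walk s t // p.length = G.dist s t} := finite_sw s t _
  have : Nonempty {p : G.Walk s t // p.length = G.dist s t} := ⟨⟨p, hp⟩⟩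
  exact Nat.card_pos

lemma numSP_self (w : V) : numSP G w w = 1 := by
  rw [numSP, Nat.card_eq_one_iff_exists]
  refine ⟨⟨.nil, by simp [SimpleGraph.dist_self]⟩, ?_⟩
  rintro ⟨q, hq⟩
  rw [SimpleGraph.dist_self] at hq
  ext1
  cases q with
  | nil => rfl
  | cons h p => simp at hq

lemma takeUntil_start [DecidableEq V] {v t : V} (p : G.Walk v t) (h : v ∈ p.support) :
    p.takeUntil v h = .nil := by
  cases p with
  | nil => rfl
  | cons h q => simp [Walk.takeUntil]

lemma takeUntil_cons_of_ne [DecidableEq V] {a b t u : V} (h : G.Adj a b) (p : G.Walk b t)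
    (hu : u ∈ p.support) (hne : a ≠ u) :
    (Walk.cons h p).takeUntil u (by simp [hu]) = Walk.cons h (p.takeUntil u hu) := by
  simp [Walk.takeUntil, hne]

lemma takeUntil_eq_self_of_shortest [DecidableEq V] {s v : V} (q : G.Walk s v)
    (hq : q.length = G.dist s v) (h : v ∈ q.support) : q.takeUntil v h = q := by
  have h1 : G.dist s v ≤ (q.takeUntil v h).length := SimpleGraph.dist_le _
  have hsplit := congrArg Walk.length (q.take_spec h)
  rw [Walk.length_append] at hsplit
  have hd : (q.dropUntil v h).length = 0 := by omega
  have hnil : q.dropUntil v h = .nil := by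
    generalize hr : q.dropUntil v h = r at hd
    cases r with
    | nil => rfl
    | cons h p => simp at hd
  conv_rhs => rw [← q.take_spec h]
  rw [hnil, Walk.append_nil]

lemma takeUntil_append_shortest [DecidableEq V] {s v t : V} (q : G.Walk s v) (r : G.Walk v t)
    (hq : q.length = G.dist s v) (h : v ∈ (q.append r).support) :
    (q.append r).takeUntil v h = q := by
  induction q with
  | nil => exact takeUntil_start r h
  | @cons a b c hadj p ih =>
    have hav : a ≠ c := by
      rintro rfl
      have : G.dist a a = 0 := SimpleGraph.dist_self
      rw [this] at hq
      simp at hq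
    have hp : p.length = G.dist b c := by
      have h1 : G.dist b c ≤ p.length := SimpleGraph.dist_le _
      have h2 : G.dist a c ≤ G.dist b c + 1 := by
        obtain ⟨q', hq'⟩ := (Walk.reachable p).exists_walk_length_eq_dist
        calc G.dist a c ≤ (Walk.cons hadj q').length := SimpleGraph.dist_le _
        _ = G.dist b c + 1 := by simp [hq']
      simp only [Walk.length_cons] at hq
      omega
    have hmem : c ∈ (p.append r).support := by
      rw [Walk.mem_support_append_iff]
      left; exact Walk.end_mem_support p
    exact (takeUntil_cons_of_ne hadj (p.append r) hmem hav).trans (by rw [ih r hp hmem])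

lemma append_right_inj {s v t : V} (q : G.Walk s v) {r r' : G.Walk v t}
    (h : q.append r = q.append r') : r = r' := by
  induction q with
  | nil => exact h
  | cons hadj p ih => exact ih (by simpa using h)

lemma numSPthru_eq [Fintype V] (hG : G.Connected) (s t x : V) :
    numSPthru G s t x =
      if G.dist s x + G.dist x t = G.dist s t then numSP G s x * numSP G x t else 0 := by
  classical
  have htri := hG.dist_triangle (u := s) (v := x) (w := t)
  split_ifs with hc
  · rw [numSPthru, numSP, numSP, ← Nat.card_prod]
    refine (Nat.card_eq_of_bijective
      (f := fun qr => (⟨qr.1.1.append qr.2.1, by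
          rw [Walk.length_append, qr.1.2, qr.2.2, hc], by
          rw [Walk.mem_support_append_iff]; exact Or.inl (Walk.end_mem_support _)⟩ :
        {p : G.Walk s t // p.length = G.dist s t ∧ x ∈ p.support})) ?_).symm
    constructor
    · rintro ⟨⟨q,hq⟩,⟨r,hr⟩⟩ ⟨⟨q',hq'⟩,⟨r',hr'⟩⟩ hEq
      simp only [Subtype.mk.injEq] at hEq
      have t1 := takeUntil_append_shortest q r hq
        (by rw [Walk.mem_support_append_iff]; exact Or.inl (Walk.end_mem_support _))
      have t2 := takeUntil_append_shortest q' r' hq'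
        (by rw [Walk.mem_support_append_iff]; exact Or.inl (Walk.end_mem_support _))
      have hF : ∀ (p p' : G.Walk s t) (hp : x ∈ p.support) (hp' : x ∈ p'.support), p = p' →
          p.takeUntil x hp = p'.takeUntil x hp' := by rintro p p' hp hp' rfl; rfl
      have e1 : q = q' := by rw [← t1, ← t2]; exact hF _ _ _ _ hEq
      subst e1
      have e2 : r = r' := append_right_inj q hEq
      subst e2
      rfl
    · rintro ⟨p, hp, hx⟩
      have hsp := congrArg Walk.length (p.take_spec hx)
      rw [Walk.length_append] at hsp
      have l1 : G.dist s x ≤ (p.takeUntil x hx).length := SimpleGraph.dist_le _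
      have l2 : G.dist x t ≤ (p.dropUntil x hx).length := SimpleGraph.dist_le _
      refine ⟨⟨⟨p.takeUntil x hx, by omega⟩, ⟨p.dropUntil x hx, by omega⟩⟩, ?_⟩
      exact Subtype.ext (p.take_spec hx)
  · rw [numSPthru]
    have : IsEmpty {p : G.Walk s t // p.length = G.dist s t ∧ x ∈ p.support} := by
      constructor; rintro ⟨p, hp, hx⟩
      have hsp := congrArg Walk.length (p.take_spec hx)
      rw [Walk.length_append] at hsp
      have l1 := SimpleGraph.dist_le (p.takeUntil x hx)
      have l2 := SimpleGraph.dist_le (p.dropUntil x hx)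
      omega
    simp

lemma card_first [Fintype V] [DecidableRel G.Adj] (hG : G.Connected) (s v t w : V) (hvt : v ≠ t)
    (hon : G.dist s v + G.dist v t = G.dist s t) :
    Nat.card {q : G.Walk v t // q.length = G.dist v t ∧ q.getVert 1 = w} =
      if G.Adj v w ∧ G.dist s w = G.dist s v + 1 ∧ G.dist s w + G.dist w t = G.dist s t
      then numSP G w t else 0 := by
  classical
  have claim : ∀ q : G.Walk v t, q.length = G.dist v t → q.getVert 1 = w →
      (G.Adj v w ∧ G.dist s w = G.dist s v + 1 ∧ G.dist s w + G.dist w t = G.dist s t) ∧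
      G.dist w t + 1 = G.dist v t := by
    intro q hlen hget
    obtain ⟨w', hadj, q', rfl⟩ := Walk.exists_eq_cons_of_ne hvt q
    have hw'0 : q'.getVert 0 = w := hget
    have hw' : w' = w := by rwa [Walk.getVert_zero] at hw'0
    subst w'
    have hq'len : q'.length + 1 = G.dist v t := by simpa using hlen
    have l1 : G.dist w t ≤ q'.length := SimpleGraph.dist_le _
    have l2 : G.dist v t ≤ G.dist w t + 1 := by
      obtain ⟨r0, hr0⟩ := hG.exists_walk_length_eq_dist w t
      calc G.dist v t ≤ (Walk.cons hadj r0).length := SimpleGraph.dist_le _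
        _ = G.dist w t + 1 := by simp [hr0]
    have l3 : G.dist s w ≤ G.dist s v + 1 := by
      have h5 := hG.dist_triangle (u := s) (v := v) (w := w)
      have hvw : G.dist v w ≤ 1 := by
        calc G.dist v w ≤ (Walk.cons hadj .nil).length := SimpleGraph.dist_le _
          _ = 1 := by simp
      omega
    have l4 : G.dist s t ≤ G.dist s w + G.dist w t := hG.dist_triangle
    exact ⟨⟨hadj, by omega, by omega⟩, by omega⟩
  split_ifs with hcond
  · obtain ⟨hadj, hdsw, hon'⟩ := hcond
    have hwt : G.dist w t + 1 = G.dist v t := by omega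
    rw [numSP]
    refine (Nat.card_eq_of_bijective (f := fun r => (⟨Walk.cons hadj r.1, by
        simp [r.2, hwt], Walk.getVert_zero r.1⟩ :
        {q : G.Walk v t // q.length = G.dist v t ∧ q.getVert 1 = w})) ?_).symm
    constructor
    · rintro ⟨r, hr⟩ ⟨r', hr'⟩ h
      simp only [Subtype.mk.injEq, Walk.cons.injEq] at h
      exact Subtype.ext (eq_of_heq h.2)
    · rintro ⟨q, hlen, hget⟩
      obtain ⟨w', hadj', q', rfl⟩ := Walk.exists_eq_cons_of_ne hvt q
      have hw'0 : q'.getVert 0 = w := hget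
      have hw' : w' = w := by rwa [Walk.getVert_zero] at hw'0
      subst w'
      have hq' : q'.length = G.dist w t := by
        simp only [Walk.length_cons] at hlen; omega
      exact ⟨⟨q', hq'⟩, Subtype.ext rfl⟩
  · have : IsEmpty {q : G.Walk v t // q.length = G.dist v t ∧ q.getVert 1 = w} := by
      constructor; rintro ⟨q, hlen, hget⟩
      exact hcond (claim q hlen hget).1
    simp

lemma nat_card_sigma {ι : Type*} [Fintype ι] (f : ι → Type*) [∀ i, Finite (f i)] :
    Nat.card (Σ i, f i) = ∑ i, Nat.card (f i) := by
  classical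
  haveI := fun i => Fintype.ofFinite (f i)
  simp [Nat.card_eq_fintype_card, Fintype.card_sigma]

lemma star_lemma [Fintype V] [DecidableEq V] [DecidableRel G.Adj] (hG : G.Connected)
    (s v t : V) (hvt : v ≠ t) (hon : G.dist s v + G.dist v t = G.dist s t) :
    numSP G v t = ∑ w ∈ univ.filter (fun w => G.Adj v w ∧ G.dist s w = G.dist s v + 1),
      (if G.dist s w + G.dist w t = G.dist s t then numSP G w t else 0) := by
  classical
  haveI : Finite {q : G.Walk v t // q.length = G.dist v t} := finite_sw v t _
  haveI : ∀ w, Finite {q : G.Walk v t // q.length = G.dist v t ∧ q.getVert 1 = w} := fun w =>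
    Finite.of_injective (fun q => (⟨q.1, q.2.1⟩ : {q : G.Walk v t // q.length = G.dist v t}))
      (by rintro ⟨a, ha⟩ ⟨b, hb⟩ h; simpa using Subtype.ext_iff.mp h)
  have e : {q : G.Walk v t // q.length = G.dist v t} ≃
      Σ w : V, {q : G.Walk v t // q.length = G.dist v t ∧ q.getVert 1 = w} :=
    ((Equiv.sigmaFiberEquiv
        (fun q : {q : G.Walk v t // q.length = G.dist v t} => q.1.getVert 1)).symm).trans
      (Equiv.sigmaCongrRight fun w => Equiv.subtypeSubtypeEquivSubtypeInter (fun q : G.Walk v t => q.length = G.dist v t) (fun q => q.getVert 1 = w))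
  rw [numSP, Nat.card_congr e, nat_card_sigma, Finset.sum_filter]
  apply Finset.sum_congr rfl
  intro w _
  rw [card_first hG s v t w hvt hon]
  simp only [ite_and]

lemma star_full [Fintype V] [DecidableEq V] [DecidableRel G.Adj] (hG : G.Connected)
    (s v t : V) (hvt : v ≠ t) :
    (if G.dist s v + G.dist v t = G.dist s t then numSP G v t else 0) =
      ∑ w ∈ univ.filter (fun w => G.Adj v w ∧ G.dist s w = G.dist s v + 1),
        (if G.dist s w + G.dist w t = G.dist s t then numSP G w t else 0) := by
  by_cases hon : G.dist s v + G.dist v t = G.dist s t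
  · rw [if_pos hon, star_lemma hG s v t hvt hon]
  · rw [if_neg hon]
    symm; apply Finset.sum_eq_zero
    intro w hw
    simp only [mem_filter, mem_univ, true_and] at hw
    obtain ⟨hadj, hdsw⟩ := hw
    rw [if_neg]
    intro hcon
    have h1 : G.dist v t ≤ G.dist w t + 1 := by
      obtain ⟨r0, hr0⟩ := hG.exists_walk_length_eq_dist w t
      calc G.dist v t ≤ (Walk.cons hadj r0).length := SimpleGraph.dist_le _
        _ = G.dist w t + 1 := by simp [hr0]
    have h2 : G.dist s t ≤ G.dist s v + G.dist v t := hG.dist_triangle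
    omega

end Aux

section Aux2
variable {G : SimpleGraph V}

lemma inner_lemma [Fintype V] [DecidableEq V] [DecidableRel G.Adj] (hG : G.Connected)
    (s v w : V) (hsv : s ≠ v) (hadj : G.Adj v w) (hdsw : G.dist s w = G.dist s v + 1) :
    ∑ t ∈ univ.filter (fun t => t ≠ s ∧ t ≠ v),
        (numSP G s v : ℝ) *
          (if G.dist s w + G.dist w t = G.dist s t then (numSP G w t : ℝ) else 0) /
          (numSP G s t)
      = ((numSP G s v : ℝ) / (numSP G s w)) * (1 + dep G s w) := by
  classical
  have hposR : ∀ a b : V, (numSP G a b : ℝ) ≠ 0 := fun a b =>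
    Nat.cast_ne_zero.mpr (Nat.pos_iff_ne_zero.mp (numSP_pos hG a b))
  have hss : G.dist s s = 0 := SimpleGraph.dist_self
  have hws : w ≠ s := by rintro rfl; omega
  have hwv : w ≠ v := by rintro rfl; omega
  have hww : G.dist w w = 0 := SimpleGraph.dist_self
  have hdwv : 0 < G.dist w v := hG.pos_dist_of_ne hwv
  set C := univ.filter (fun t => t ≠ s ∧ t ≠ v ∧ t ≠ w) with hCdef
  have hA : univ.filter (fun t => t ≠ s ∧ t ≠ v) = insert w C := by
    ext t
    simp only [hCdef, mem_filter, mem_univ, true_and, mem_insert]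
    constructor
    · rintro ⟨h1, h2⟩
      by_cases h : t = w
      · exact Or.inl h
      · exact Or.inr ⟨h1, h2, h⟩
    · rintro (rfl | ⟨h1, h2, h3⟩)
      exacts [⟨hws, hwv⟩, ⟨h1, h2⟩]
  have hB : univ.filter (fun t => t ≠ s ∧ t ≠ w) = insert v C := by
    ext t
    simp only [hCdef, mem_filter, mem_univ, true_and, mem_insert]
    constructor
    · rintro ⟨h1, h2⟩
      by_cases h : t = v
      · exact Or.inl h
      · exact Or.inr ⟨h1, h, h2⟩
    · rintro (rfl | ⟨h1, h2, h3⟩)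
      exacts [⟨hsv.symm, fun h => hwv h.symm⟩, ⟨h1, h3⟩]
  have hwC : w ∉ C := by simp [hCdef]
  have hvC : v ∉ C := by simp [hCdef]
  have hFw : (numSP G s v : ℝ) *
        (if G.dist s w + G.dist w w = G.dist s w then (numSP G w w : ℝ) else 0) /
        (numSP G s w) = (numSP G s v : ℝ) / (numSP G s w) := by
    rw [if_pos (by omega), numSP_self, Nat.cast_one, mul_one]
  have hdep : dep G s w = ∑ t ∈ insert v C, (numSPthru G s t w : ℝ) / (numSP G s t) := by
    rw [dep, hB]
  have h0 : numSPthru G s v w = 0 := by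
    rw [numSPthru_eq hG, if_neg (by omega)]
  have hterm : ∑ t ∈ C,
      (numSP G s v : ℝ) *
        (if G.dist s w + G.dist w t = G.dist s t then (numSP G w t : ℝ) else 0) /
        (numSP G s t)
      = ((numSP G s v : ℝ) / (numSP G s w)) *
        ∑ t ∈ C, (numSPthru G s t w : ℝ) / (numSP G s t) := by
    rw [Finset.mul_sum]
    apply Finset.sum_congr rfl
    intro t htC
    rw [numSPthru_eq hG s t w]
    split_ifs with h
    · push_cast
      rw [div_mul_div_comm, mul_left_comm, mul_div_mul_left _ _ (hposR s w)]
    · simp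
  rw [hA, Finset.sum_insert hwC, hFw, hdep, Finset.sum_insert hvC, h0, Nat.cast_zero, zero_div,
    hterm]
  ring

end Aux2

/-- Brandes' dependency accumulation recursion. -/
theorem brandes_recursion [Fintype V] [DecidableEq V] (G : SimpleGraph V)
    [DecidableRel G.Adj] (hG : G.Connected) (s v : V) (hsv : s ≠ v) :
    dep G s v =
      ∑ w ∈ univ.filter (fun w => G.Adj v w ∧ G.dist s w = G.dist s v + 1),
        ((numSP G s v : ℝ) / (numSP G s w)) * (1 + dep G s w) := by
  classical
  have key : ∀ t ∈ univ.filter (fun t => t ≠ s ∧ t ≠ v),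
      (numSPthru G s t v : ℝ) / (numSP G s t) =
      ∑ w ∈ univ.filter (fun w => G.Adj v w ∧ G.dist s w = G.dist s v + 1),
        (numSP G s v : ℝ) *
          (if G.dist s w + G.dist w t = G.dist s t then (numSP G w t : ℝ) else 0) /
          (numSP G s t) := by
    intro t ht
    simp only [mem_filter, mem_univ, true_and] at ht
    have hvt : v ≠ t := fun h => ht.2 h.symm
    have hcast : ((numSPthru G s t v : ℕ) : ℝ) = (numSP G s v : ℝ) *
        (((if G.dist s v + G.dist v t = G.dist s t then numSP G v t else 0 : ℕ)) : ℝ) := by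
      rw [numSPthru_eq hG s t v]
      split_ifs <;> push_cast <;> ring
    rw [hcast, star_full hG s v t hvt]
    push_cast
    rw [Finset.mul_sum, Finset.sum_div]
  calc dep G s v
      = ∑ t ∈ univ.filter (fun t => t ≠ s ∧ t ≠ v),
          ∑ w ∈ univ.filter (fun w => G.Adj v w ∧ G.dist s w = G.dist s v + 1),
            (numSP G s v : ℝ) *
              (if G.dist s w + G.dist w t = G.dist s t then (numSP G w t : ℝ) else 0) /
              (numSP G s t) := Finset.sum_congr rfl key
    _ = ∑ w ∈ univ.filter (fun w => G.Adj v w ∧ G.dist s w = G.dist s v + 1),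
          ∑ t ∈ univ.filter (fun t => t ≠ s ∧ t ≠ v),
            (numSP G s v : ℝ) *
              (if G.dist s w + G.dist w t = G.dist s t then (numSP G w t : ℝ) else 0) /
              (numSP G s t) := Finset.sum_comm
    _ = _ := by
        apply Finset.sum_congr rfl
        intro w hw
        simp only [mem_filter, mem_univ, true_and] at hw
        exact inner_lemma hG s v w hsv hw.1 hw.2
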